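/- Fix n ∈ ℕ, n ≥ 1, a leaf labeling x : {0,1}^n → {0,1}, and ε > 0. Let R be uniform on {1,…,n} and, independently given R, let Y be uniform on {0,1}^{n−R}. Then Pr[|ρ(Y0) − ρ(Y1)| ≥ ε] ≤ 4/(n·ε²), where Y0 and Y1 denote Y extended by the bit 0 and by the bit 1 respectively. -/

import Mathlib

open scoped Classical

/-- `rho x n i y` is `ρ(y)`: the fraction of 1-labeled leaves of the complete binary tree
of depth `n` whose index extends the length-`i` string `y`.  Strings are encoded
numerically in lexicographic (most-significant-bit-first) order: the length-`i` string
with numeric value `y < 2^i` corresponds to the block of leaves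
`[y·2^{n-i}, (y+1)·2^{n-i})`, and the leaf labeling is `x : ℕ → Bool` (restricted to
indices `< 2^n`). -/
noncomputable def rho (x : ℕ → Bool) (n i y : ℕ) : ℝ :=
  (((Finset.Ico (y * 2 ^ (n - i)) ((y + 1) * 2 ^ (n - i))).filter
      (fun j => x j = true)).card : ℝ) / 2 ^ (n - i)

/-- `Xwalk x n t z` is the martingale value `X(t) = ρ(z_1, …, z_t)` along the leaf `z`:
the density of 1-labels below the length-`t` prefix of the length-`n` string `z`
(numerically, the prefix of `z < 2^n` of length `t` is `z / 2^{n-t}`). -/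
noncomputable def Xwalk (x : ℕ → Bool) (n t z : ℕ) : ℝ :=
  rho x n t (z / 2 ^ (n - t))

/-!
Along a uniformly random leaf `z`, the densities `X_t = ρ(z_1 ⋯ z_t)` form a martingale with
values in `[0, 1]`: each `ρ(y)` is the average of `ρ(y0)` and `ρ(y1)`. Martingale increments are
orthogonal, so `∑_t E[(X_{t+1} - X_t)²] = E[X_n²] - E[X_0²] ≤ 1`. At a node `y` of depth `t` the
increment is `±(ρ(y0) - ρ(y1))/2`, hence the squared sibling gaps, averaged over the nodes of each
level, sum to at most `4` over all levels. Averaging over the level `R` and applying Chebyshev's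
inequality gives the bound.
-/

open Finset

lemma Finset.sum_range_two_mul {M : Type*} [AddCommMonoid M] (g : ℕ → M) (m : ℕ) :
    ∑ z ∈ range (2 * m), g z = ∑ y ∈ range m, (g (2 * y) + g (2 * y + 1)) := by
  induction m with
  | zero => simp
  | succ m ih =>
    rw [show 2 * (m + 1) = 2 * m + 1 + 1 by ring, sum_range_succ, sum_range_succ,
      sum_range_succ, ih, add_assoc]

lemma ite_le_sq_div_sq {ε : ℝ} (hε : 0 < ε) (d : ℝ) :
    (if ε ≤ |d| then (1 : ℝ) else 0) ≤ d ^ 2 / ε ^ 2 := by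
  split_ifs with h
  · rw [one_le_div (by positivity), ← sq_abs d]
    exact pow_le_pow_left₀ hε.le h 2
  · positivity

section DyadicMartingale

variable (f : ℕ → ℕ → ℝ)

/-- `E[X_i²]`, where `X_i = f i y` for `y` uniform over the `2 ^ i` nodes of level `i`. -/
noncomputable def dyadicSecondMoment (i : ℕ) : ℝ :=
  (2 ^ i : ℝ)⁻¹ * ∑ y ∈ range (2 ^ i), f i y ^ 2

variable {f}

lemma dyadicSecondMoment_nonneg (i : ℕ) : 0 ≤ dyadicSecondMoment f i := by
  unfold dyadicSecondMoment; positivity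

lemma dyadicSecondMoment_le_one {i : ℕ} (hf : ∀ y, |f i y| ≤ 1) : dyadicSecondMoment f i ≤ 1 := by
  unfold dyadicSecondMoment
  rw [inv_mul_le_iff₀ (by positivity), mul_one]
  calc ∑ y ∈ range (2 ^ i), f i y ^ 2 ≤ ∑ _y ∈ range (2 ^ i), (1 : ℝ) :=
        sum_le_sum fun y _ => (sq_le_one_iff_abs_le_one _).mpr (hf y)
    _ = 2 ^ i := by simp

/-- Orthogonality of martingale increments:
`((a + b) / 2)² + ((a - b) / 2)² = (a² + b²) / 2`. -/
lemma sum_sibling_sq_eq_four_mul_dyadicSecondMoment_sub {i : ℕ}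
    (hf : ∀ y, f i y = (f (i + 1) (2 * y) + f (i + 1) (2 * y + 1)) / 2) :
    (2 ^ i : ℝ)⁻¹ * ∑ y ∈ range (2 ^ i), (f (i + 1) (2 * y) - f (i + 1) (2 * y + 1)) ^ 2 =
      4 * (dyadicSecondMoment f (i + 1) - dyadicSecondMoment f i) := by
  have hsq : ∑ y ∈ range (2 ^ i), (f (i + 1) (2 * y) - f (i + 1) (2 * y + 1)) ^ 2 =
      4 * ∑ y ∈ range (2 ^ i),
        ((f (i + 1) (2 * y) ^ 2 + f (i + 1) (2 * y + 1) ^ 2) / 2 - f i y ^ 2) := by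
    rw [mul_sum]
    exact sum_congr rfl fun y _ => by rw [hf y]; ring
  unfold dyadicSecondMoment
  rw [hsq, show 2 ^ (i + 1) = 2 * 2 ^ i by ring, sum_range_two_mul, sum_sub_distrib,
    ← sum_div]
  ring

lemma sum_sibling_sq_le_four {n : ℕ}
    (hf : ∀ i < n, ∀ y, f i y = (f (i + 1) (2 * y) + f (i + 1) (2 * y + 1)) / 2)
    (hbound : ∀ y, |f n y| ≤ 1) :
    ∑ i ∈ range n, (2 ^ i : ℝ)⁻¹ *
      ∑ y ∈ range (2 ^ i), (f (i + 1) (2 * y) - f (i + 1) (2 * y + 1)) ^ 2 ≤ 4 := by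
  rw [sum_congr rfl fun i hi =>
      sum_sibling_sq_eq_four_mul_dyadicSecondMoment_sub (hf i (mem_range.mp hi)),
    ← mul_sum, sum_range_sub]
  linarith [dyadicSecondMoment_le_one hbound, dyadicSecondMoment_nonneg (f := f) 0]

end DyadicMartingale

lemma rho_nonneg (x : ℕ → Bool) (n i y : ℕ) : 0 ≤ rho x n i y := by
  unfold rho; positivity

lemma rho_le_one (x : ℕ → Bool) (n i y : ℕ) : rho x n i y ≤ 1 := by
  unfold rho
  rw [div_le_one (by positivity)]
  calc _ ≤ ((Ico (y * 2 ^ (n - i)) ((y + 1) * 2 ^ (n - i))).card : ℝ) :=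
        mod_cast card_filter_le _ _
    _ = 2 ^ (n - i) := by rw [Nat.card_Ico, add_one_mul, Nat.add_sub_cancel_left]; push_cast; rfl

lemma abs_rho_le_one (x : ℕ → Bool) (n i y : ℕ) : |rho x n i y| ≤ 1 :=
  abs_le.mpr ⟨by linarith [rho_nonneg x n i y], rho_le_one x n i y⟩

lemma rho_eq_average_children (x : ℕ → Bool) {n i : ℕ} (h : i < n) (y : ℕ) :
    rho x n i y = (rho x n (i + 1) (2 * y) + rho x n (i + 1) (2 * y + 1)) / 2 := by
  obtain ⟨k, hk⟩ : ∃ k, n - i = k + 1 := ⟨n - (i + 1), by omega⟩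
  have hk' : n - (i + 1) = k := by omega
  unfold rho
  rw [hk, hk', show y * 2 ^ (k + 1) = 2 * y * 2 ^ k by ring,
    show (y + 1) * 2 ^ (k + 1) = (2 * y + 1 + 1) * 2 ^ k by ring,
    ← Ico_union_Ico_eq_Ico (b := (2 * y + 1) * 2 ^ k) (by gcongr; omega) (by gcongr; omega),
    filter_union,
    card_union_of_disjoint
      (disjoint_filter_filter (Ico_disjoint_Ico_consecutive _ _ _))]
  push_cast
  field_simp
  ring

theorem sibling_density_tail_bound_general (n : ℕ) (x : ℕ → Bool)
    (ε : ℝ) (hε : 0 < ε) :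
    (1 / (n : ℝ)) * ∑ r ∈ Finset.Icc 1 n,
        (1 / (2 ^ (n - r) : ℝ)) * ∑ y ∈ Finset.range (2 ^ (n - r)),
          (if ε ≤ |rho x n (n - r + 1) (2 * y) - rho x n (n - r + 1) (2 * y + 1)|
            then (1 : ℝ) else 0)
      ≤ 4 / (n * ε ^ 2) := by
  have hlevels (g : ℕ → ℝ) : ∑ r ∈ Icc 1 n, g (n - r) = ∑ i ∈ range n, g i := by
    rw [← Ico_add_one_right_eq_Icc, sum_Ico_reflect _ _ le_rfl]
    simp
  rw [hlevels fun i => (1 / (2 ^ i : ℝ)) * ∑ y ∈ range (2 ^ i),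
    (if ε ≤ |rho x n (i + 1) (2 * y) - rho x n (i + 1) (2 * y + 1)| then (1 : ℝ) else 0)]
  calc _ ≤ 1 / (n : ℝ) * ∑ i ∈ range n, 1 / (2 ^ i : ℝ) * ∑ y ∈ range (2 ^ i),
        (rho x n (i + 1) (2 * y) - rho x n (i + 1) (2 * y + 1)) ^ 2 / ε ^ 2 := by
        gcongr with i _ y _
        exact ite_le_sq_div_sq hε _
    _ = 1 / (n * ε ^ 2) * ∑ i ∈ range n, (2 ^ i : ℝ)⁻¹ * ∑ y ∈ range (2 ^ i),
        (rho x n (i + 1) (2 * y) - rho x n (i + 1) (2 * y + 1)) ^ 2 := by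
        simp_rw [← sum_div]
        rw [mul_sum, mul_sum]
        exact sum_congr rfl fun i _ => by ring
    _ ≤ 1 / (n * ε ^ 2) * 4 := by
        gcongr
        exact sum_sibling_sq_le_four (fun i hi => rho_eq_average_children x hi)
          (abs_rho_le_one x n n)
    _ = 4 / (n * ε ^ 2) := by ring

/-- Tail bound for sibling densities: for `R` uniform on `{1, …, n}` and, given `R`,
`Y` uniform on `{0,1}^{n-R}`, one has `Pr[|ρ(Y0) - ρ(Y1)| ≥ ε] ≤ 4/(n ε²)`.
(Numerically, the string `Y` of length `n - r` is uniform on `{0, …, 2^{n-r} - 1}`,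
and `Y0, Y1` have numeric values `2Y, 2Y + 1` at level `n - r + 1`.) -/
theorem sibling_density_tail_bound (n : ℕ) (hn : 1 ≤ n) (x : ℕ → Bool)
    (ε : ℝ) (hε : 0 < ε) :
    (1 / (n : ℝ)) * ∑ r ∈ Finset.Icc 1 n,
        (1 / (2 ^ (n - r) : ℝ)) * ∑ y ∈ Finset.range (2 ^ (n - r)),
          (if ε ≤ |rho x n (n - r + 1) (2 * y) - rho x n (n - r + 1) (2 * y + 1)|
            then (1 : ℝ) else 0)
      ≤ 4 / (n * ε ^ 2) :=
  sibling_density_tail_bound_general n x ε hε
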